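/- Nielsen's theorem, easy direction for d = 2: if a two-qubit pure state with Schmidt vector (λ, 1-λ), λ ≥ 1/2, can be converted to one with Schmidt vector (μ, 1-μ), μ ≥ 1/2, by the POVM protocol above, then necessarily μ ≥ λ; equivalently, majorization (μ,1-μ) ≻ (λ,1-λ) holds iff μ ≥ λ. -/
import Mathlib


/-- The sum of the `k` largest entries of `x` (as a sup over subsets of size `k`). -/
noncomputable def topSum {d : ℕ} (x : Fin d → ℝ) (k : ℕ) : ℝ :=
  sSup {t : ℝ | ∃ s : Finset (Fin d), s.card = k ∧ t = ∑ i ∈ s, x i}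

/-- `y` majorizes `x`. -/
def Majorizes {d : ℕ} (y x : Fin d → ℝ) : Prop :=
  (∀ k, k ≤ d → topSum x k ≤ topSum y k) ∧ ∑ i, x i = ∑ i, y i

/-- A probability vector: nonnegative entries summing to one. -/
def IsProbVec {d : ℕ} (x : Fin d → ℝ) : Prop :=
  (∀ i, 0 ≤ x i) ∧ ∑ i, x i = 1

open Matrix

/-- The matrix `M 0 ⊗ M 1` acting on two qubits. -/
def localMat (M : Fin 2 → Matrix (Fin 2) (Fin 2) ℂ) :
    Matrix (Fin 2 → Fin 2) (Fin 2 → Fin 2) ℂ :=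
  Matrix.of fun f g => ∏ i, M i (f i) (g i)

/-- The two-qubit pure state with Schmidt vector `(l, 1-l)`:
`√l |00⟩ + √(1-l) |11⟩`. -/
noncomputable def schmidtState (l : ℝ) : (Fin 2 → Fin 2) → ℂ := fun f =>
  if f = ![0, 0] then ((Real.sqrt l : ℝ) : ℂ)
  else if f = ![1, 1] then ((Real.sqrt (1 - l) : ℝ) : ℂ) else 0

/-- Deterministic conversion by a one-sided POVM protocol: a POVM `{M_k}` on the
first qubit and correcting unitaries `U_k` on the second such that every outcome
yields the target state up to a nonzero scalar. -/
def POVMConverts (l m : ℝ) : Prop :=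
  ∃ M U : Fin 2 → Matrix (Fin 2) (Fin 2) ℂ,
    ((M 0)ᴴ * M 0 + (M 1)ᴴ * M 1 = 1) ∧
    (∀ k, U k ∈ Matrix.unitaryGroup (Fin 2) ℂ) ∧
    (∀ k, ∃ c : ℂ, c ≠ 0 ∧
      localMat ![M k, U k] *ᵥ schmidtState l = c • schmidtState m)

lemma topSum_zero {d : ℕ} (x : Fin d → ℝ) : topSum x 0 = 0 := by
  have : {t : ℝ | ∃ s : Finset (Fin d), s.card = 0 ∧ t = ∑ i ∈ s, x i} = {0} := by
    ext t
    simp [Finset.card_eq_zero]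
  rw [topSum, this, csSup_singleton]

lemma topSum_one (x : Fin 2 → ℝ) : topSum x 1 = max (x 0) (x 1) := by
  have : {t : ℝ | ∃ s : Finset (Fin 2), s.card = 1 ∧ t = ∑ i ∈ s, x i} = {x 0, x 1} := by
    ext t
    constructor
    · rintro ⟨s, hs, rfl⟩
      obtain ⟨a, rfl⟩ := Finset.card_eq_one.mp hs
      fin_cases a <;> simp
    · rintro (rfl | rfl)
      · exact ⟨{0}, by simp⟩
      · exact ⟨{1}, by simp⟩
  rw [topSum, this, csSup_pair]

lemma topSum_two (x : Fin 2 → ℝ) : topSum x 2 = x 0 + x 1 := by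
  have : {t : ℝ | ∃ s : Finset (Fin 2), s.card = 2 ∧ t = ∑ i ∈ s, x i} = {x 0 + x 1} := by
    ext t
    constructor
    · rintro ⟨s, hs, rfl⟩
      have : s = Finset.univ := Finset.eq_univ_of_card s (by simpa using hs)
      subst this
      simp [Fin.sum_univ_two]
    · rintro rfl
      exact ⟨Finset.univ, by simp [Fin.sum_univ_two]⟩
  rw [topSum, this, csSup_singleton]

lemma eval_schmidt (A B : Matrix (Fin 2) (Fin 2) ℂ) (l : ℝ) (i j : Fin 2) :
    (localMat ![A, B] *ᵥ schmidtState l) ![i, j] =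
      A i 0 * B j 0 * ((Real.sqrt l : ℝ) : ℂ) + A i 1 * B j 1 * ((Real.sqrt (1 - l) : ℝ) : ℂ) := by
  rw [mulVec, dotProduct]
  rw [show (Finset.univ : Finset (Fin 2 → Fin 2)) = {![0,0], ![0,1], ![1,0], ![1,1]} from by decide]
  rw [Finset.sum_insert (by decide), Finset.sum_insert (by decide), Finset.sum_insert (by decide),
    Finset.sum_singleton]
  simp [localMat, schmidtState, Fin.prod_univ_two,
    show ¬(![(0:Fin 2),1] = ![0,0]) from by decide, show ¬(![(0:Fin 2),1] = ![1,1]) from by decide,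
    show ¬(![(1:Fin 2),0] = ![0,0]) from by decide, show ¬(![(1:Fin 2),0] = ![1,1]) from by decide,
    show ¬(![(1:Fin 2),1] = ![0,0]) from by decide]

lemma schmidt_apply (l : ℝ) (i j : Fin 2) :
    schmidtState l ![i, j] = if i = 0 ∧ j = 0 then ((Real.sqrt l : ℝ) : ℂ)
      else if i = 1 ∧ j = 1 then ((Real.sqrt (1 - l) : ℝ) : ℂ) else 0 := by
  fin_cases i <;> fin_cases j <;>
    simp [schmidtState,
      show ¬(![(0:Fin 2),1] = ![0,0]) from by decide, show ¬(![(0:Fin 2),1] = ![1,1]) from by decide,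
      show ¬(![(1:Fin 2),0] = ![0,0]) from by decide, show ¬(![(1:Fin 2),0] = ![1,1]) from by decide,
      show ¬(![(1:Fin 2),1] = ![0,0]) from by decide]

lemma outcome_key (A V : Matrix (Fin 2) (Fin 2) ℂ) (c : ℂ) (l m : ℝ)
    (hl0 : 0 ≤ l) (hl1 : l ≤ 1) (hm0 : 0 ≤ m) (hm1 : m ≤ 1) (hm : 1/2 ≤ m)
    (hV : V ∈ Matrix.unitaryGroup (Fin 2) ℂ)
    (heq : localMat ![A, V] *ᵥ schmidtState l = c • schmidtState m) :
    (Complex.normSq (A 0 0) + Complex.normSq (A 1 0)) * l ≤ Complex.normSq c * m ∧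
    (Complex.normSq (A 0 0) + Complex.normSq (A 1 0)) * l
      + (Complex.normSq (A 0 1) + Complex.normSq (A 1 1)) * (1 - l) = Complex.normSq c := by
  set a : ℂ := ((Real.sqrt l : ℝ) : ℂ) with ha
  set b : ℂ := ((Real.sqrt (1 - l) : ℝ) : ℂ) with hb
  set p : ℂ := ((Real.sqrt m : ℝ) : ℂ) with hp
  set q : ℂ := ((Real.sqrt (1 - m) : ℝ) : ℂ) with hq
  -- scalar equations
  have E : ∀ i j : Fin 2, A i 0 * V j 0 * a + A i 1 * V j 1 * b = c * schmidtState m ![i, j] := by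
    intro i j
    rw [← eval_schmidt, heq]; rfl
  have E00 := E 0 0; have E01 := E 0 1; have E10 := E 1 0; have E11 := E 1 1
  rw [schmidt_apply] at E00 E01 E10 E11
  norm_num at E00 E01 E10 E11
  -- unitarity entries (columns and rows)
  have h1 : star V * V = 1 := hV.1
  have h2 : V * star V = 1 := hV.2
  have hcol0 : (starRingEnd ℂ) (V 0 0) * V 0 0 + (starRingEnd ℂ) (V 1 0) * V 1 0 = 1 := by
    simpa [Matrix.mul_apply, Fin.sum_univ_two, Matrix.star_apply, Matrix.one_apply]
      using Matrix.ext_iff.mpr h1 0 0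
  have hcol01 : (starRingEnd ℂ) (V 0 0) * V 0 1 + (starRingEnd ℂ) (V 1 0) * V 1 1 = 0 := by
    simpa [Matrix.mul_apply, Fin.sum_univ_two, Matrix.star_apply, Matrix.one_apply]
      using Matrix.ext_iff.mpr h1 0 1
  have hcol10 : (starRingEnd ℂ) (V 0 1) * V 0 0 + (starRingEnd ℂ) (V 1 1) * V 1 0 = 0 := by
    simpa [Matrix.mul_apply, Fin.sum_univ_two, Matrix.star_apply, Matrix.one_apply]
      using Matrix.ext_iff.mpr h1 1 0
  have hcol1 : (starRingEnd ℂ) (V 0 1) * V 0 1 + (starRingEnd ℂ) (V 1 1) * V 1 1 = 1 := by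
    simpa [Matrix.mul_apply, Fin.sum_univ_two, Matrix.star_apply, Matrix.one_apply]
      using Matrix.ext_iff.mpr h1 1 1
  have hrow0 : V 0 0 * (starRingEnd ℂ) (V 0 0) + V 0 1 * (starRingEnd ℂ) (V 0 1) = 1 := by
    simpa [Matrix.mul_apply, Fin.sum_univ_two, Matrix.star_apply, Matrix.one_apply]
      using Matrix.ext_iff.mpr h2 0 0
  -- polar decompositions of A entries
  have hA00 : A 0 0 * a = c * p * (starRingEnd ℂ) (V 0 0) := by
    linear_combination (starRingEnd ℂ) (V 0 0) * E00 + (starRingEnd ℂ) (V 1 0) * E01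
      - A 0 0 * a * hcol0 - A 0 1 * b * hcol01
  have hA10 : A 1 0 * a = c * q * (starRingEnd ℂ) (V 1 0) := by
    linear_combination (starRingEnd ℂ) (V 0 0) * E10 + (starRingEnd ℂ) (V 1 0) * E11
      - A 1 0 * a * hcol0 - A 1 1 * b * hcol01
  have hA01 : A 0 1 * b = c * p * (starRingEnd ℂ) (V 0 1) := by
    linear_combination (starRingEnd ℂ) (V 0 1) * E00 + (starRingEnd ℂ) (V 1 1) * E01
      - A 0 1 * b * hcol1 - A 0 0 * a * hcol10
  have hA11 : A 1 1 * b = c * q * (starRingEnd ℂ) (V 1 1) := by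
    linear_combination (starRingEnd ℂ) (V 0 1) * E10 + (starRingEnd ℂ) (V 1 1) * E11
      - A 1 1 * b * hcol1 - A 1 0 * a * hcol10
  -- real normSq relations
  have nsq : ∀ z w : ℂ, z * a = w → Complex.normSq z * l = Complex.normSq w := by
    intro z w h
    have := congrArg Complex.normSq h
    rw [Complex.normSq_mul, ha, Complex.normSq_ofReal, Real.mul_self_sqrt hl0] at this
    exact this
  have nsqb : ∀ z w : ℂ, z * b = w → Complex.normSq z * (1 - l) = Complex.normSq w := by
    intro z w h
    have := congrArg Complex.normSq h
    rw [Complex.normSq_mul, hb, Complex.normSq_ofReal, Real.mul_self_sqrt (by linarith)] at this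
    exact this
  have n00 : Complex.normSq (A 0 0) * l
      = Complex.normSq c * (m * Complex.normSq (V 0 0)) := by
    have := nsq _ _ hA00
    rw [Complex.normSq_mul, Complex.normSq_mul, Complex.normSq_conj, hp,
      Complex.normSq_ofReal, Real.mul_self_sqrt hm0] at this
    linarith [this]
  have n10 : Complex.normSq (A 1 0) * l
      = Complex.normSq c * ((1 - m) * Complex.normSq (V 1 0)) := by
    have := nsq _ _ hA10
    rw [Complex.normSq_mul, Complex.normSq_mul, Complex.normSq_conj, hq,
      Complex.normSq_ofReal, Real.mul_self_sqrt (by linarith)] at this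
    linarith [this]
  have n01 : Complex.normSq (A 0 1) * (1 - l)
      = Complex.normSq c * (m * Complex.normSq (V 0 1)) := by
    have := nsqb _ _ hA01
    rw [Complex.normSq_mul, Complex.normSq_mul, Complex.normSq_conj, hp,
      Complex.normSq_ofReal, Real.mul_self_sqrt hm0] at this
    linarith [this]
  have n11 : Complex.normSq (A 1 1) * (1 - l)
      = Complex.normSq c * ((1 - m) * Complex.normSq (V 1 1)) := by
    have := nsqb _ _ hA11
    rw [Complex.normSq_mul, Complex.normSq_mul, Complex.normSq_conj, hq,
      Complex.normSq_ofReal, Real.mul_self_sqrt (by linarith)] at this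
    linarith [this]
  -- real unitarity relations
  have ucol0 : Complex.normSq (V 0 0) + Complex.normSq (V 1 0) = 1 := by
    have h := hcol0
    rw [mul_comm, Complex.mul_conj, mul_comm, Complex.mul_conj] at h
    exact_mod_cast h
  have ucol1 : Complex.normSq (V 0 1) + Complex.normSq (V 1 1) = 1 := by
    have h := hcol1
    rw [mul_comm, Complex.mul_conj, mul_comm, Complex.mul_conj] at h
    exact_mod_cast h
  have urow0 : Complex.normSq (V 0 0) + Complex.normSq (V 0 1) = 1 := by
    have h := hrow0
    rw [Complex.mul_conj, Complex.mul_conj] at h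
    exact_mod_cast h
  constructor
  · have e2 : Complex.normSq c * m * (Complex.normSq (V 0 0) + Complex.normSq (V 1 0) - 1) = 0 := by
      rw [ucol0]; ring
    have hint : 0 ≤ Complex.normSq c * Complex.normSq (V 1 0) * (2 * m - 1) :=
      mul_nonneg (mul_nonneg (Complex.normSq_nonneg c) (Complex.normSq_nonneg _))
        (by linarith)
    nlinarith [n00, n10, e2, hint]
  · linear_combination n00 + n10 + n01 + n11 + Complex.normSq c * m * urow0
      + Complex.normSq c * (1 - m) * (ucol0 + ucol1 - urow0)

/-- Easy direction of Nielsen's theorem for two qubits: if `(λ,1-λ)` can be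
converted to `(μ,1-μ)` by the POVM protocol, then `μ ≥ λ`; equivalently,
`(μ,1-μ)` majorizes `(λ,1-λ)` iff `μ ≥ λ`. -/
theorem nielsen_two_qubit (l m : ℝ) (hl1 : 1 / 2 ≤ l) (hl2 : l ≤ 1)
    (hm1 : 1 / 2 ≤ m) (hm2 : m ≤ 1) :
    (POVMConverts l m → l ≤ m) ∧
    (Majorizes ![m, 1 - m] ![l, 1 - l] ↔ l ≤ m) := by
  constructor
  · rintro ⟨M, U, hP, hU, hc⟩
    obtain ⟨c0, hc0, he0⟩ := hc 0
    obtain ⟨c1, hc1, he1⟩ := hc 1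
    have k0 := outcome_key (M 0) (U 0) c0 l m (by linarith) hl2 (by linarith) hm2 hm1 (hU 0) he0
    have k1 := outcome_key (M 1) (U 1) c1 l m (by linarith) hl2 (by linarith) hm2 hm1 (hU 1) he1
    -- POVM completeness, columns 0 and 1
    have p0c : (starRingEnd ℂ) (M 0 0 0) * M 0 0 0 + (starRingEnd ℂ) (M 0 1 0) * M 0 1 0
        + ((starRingEnd ℂ) (M 1 0 0) * M 1 0 0 + (starRingEnd ℂ) (M 1 1 0) * M 1 1 0) = 1 := by
      simpa [Matrix.add_apply, Matrix.mul_apply, Fin.sum_univ_two, Matrix.conjTranspose_apply,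
        Matrix.one_apply] using Matrix.ext_iff.mpr hP 0 0
    have p1c : (starRingEnd ℂ) (M 0 0 1) * M 0 0 1 + (starRingEnd ℂ) (M 0 1 1) * M 0 1 1
        + ((starRingEnd ℂ) (M 1 0 1) * M 1 0 1 + (starRingEnd ℂ) (M 1 1 1) * M 1 1 1) = 1 := by
      simpa [Matrix.add_apply, Matrix.mul_apply, Fin.sum_univ_two, Matrix.conjTranspose_apply,
        Matrix.one_apply] using Matrix.ext_iff.mpr hP 1 1
    have p0 : Complex.normSq (M 0 0 0) + Complex.normSq (M 0 1 0)
        + (Complex.normSq (M 1 0 0) + Complex.normSq (M 1 1 0)) = 1 := by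
      rw [mul_comm, Complex.mul_conj, mul_comm, Complex.mul_conj, mul_comm, Complex.mul_conj,
        mul_comm, Complex.mul_conj] at p0c
      exact_mod_cast p0c
    have p1 : Complex.normSq (M 0 0 1) + Complex.normSq (M 0 1 1)
        + (Complex.normSq (M 1 0 1) + Complex.normSq (M 1 1 1)) = 1 := by
      rw [mul_comm, Complex.mul_conj, mul_comm, Complex.mul_conj, mul_comm, Complex.mul_conj,
        mul_comm, Complex.mul_conj] at p1c
      exact_mod_cast p1c
    have s1 : Complex.normSq c0 + Complex.normSq c1 = 1 := by
      linear_combination l * p0 + (1 - l) * p1 - k0.2 - k1.2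
    have e3 : (Complex.normSq (M 0 0 0) + Complex.normSq (M 0 1 0)) * l
        + (Complex.normSq (M 1 0 0) + Complex.normSq (M 1 1 0)) * l = l := by
      linear_combination l * p0
    have e4 : Complex.normSq c0 * m + Complex.normSq c1 * m = m := by
      linear_combination m * s1
    linarith [k0.1, k1.1, e3, e4]
  · constructor
    · rintro ⟨h, _⟩
      have h1 := h 1 (by norm_num)
      rw [topSum_one, topSum_one] at h1
      simp only [Matrix.cons_val_zero, Matrix.cons_val_one, Matrix.head_cons] at h1
      rw [max_eq_left (by linarith), max_eq_left (by linarith)] at h1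
      exact h1
    · intro hlm
      refine ⟨?_, by simp [Fin.sum_univ_two]⟩
      intro k hk
      interval_cases k
      · simp [topSum_zero]
      · rw [topSum_one, topSum_one]
        simp only [Matrix.cons_val_zero, Matrix.cons_val_one, Matrix.head_cons]
        rw [max_eq_left (by linarith), max_eq_left (by linarith)]
        exact hlm
      · rw [topSum_two, topSum_two]
        simp only [Matrix.cons_val_zero, Matrix.cons_val_one, Matrix.head_cons]
        norm_num
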